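/- Under Gaussian summary data, the debiased loss is an unbiased estimator of the oracle loss up to a constant: for every fixed β ∈ ℝ^K, E[(1/2)β^T(Π̂^T W Π̂ − V)β − Γ̂^T W Π̂ β] = (1/2)β^T Π^T W Π β − Γ^T W Π β, where V = Σ_j Σ_{Xj} σ_{Yj}^{-2}. -/

import Mathlib

/-! For each `j` the scalar `Lⱼ = γ̂ⱼᵀβ` has law `N(γⱼᵀβ, βᵀΣ_{Xj}β)` and is independent of `Γ̂ⱼ`.
The debiased loss is the `σ_{Yj}⁻²`-weighted sum over `j` of `½(Lⱼ² − βᵀΣ_{Xj}β) − Γ̂ⱼ Lⱼ`; since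
`βᵀΣ_{Xj}β = Var Lⱼ`, the first term has mean `½(E Lⱼ)²`, and by independence the second has mean
`Γⱼ · γⱼᵀβ`. The oracle loss is the same weighted sum of `½(γⱼᵀβ)² − Γⱼ γⱼᵀβ`. -/

open MeasureTheory ProbabilityTheory Matrix Finset

/-- A random vector is Gaussian with mean `m` and covariance `S` iff every linear functional
of it is a real Gaussian with the corresponding mean and variance. -/
def IsGaussianVec {Ω : Type*} [MeasurableSpace Ω] {K : ℕ} (μ : Measure Ω)
    (X : Ω → Fin K → ℝ) (m : Fin K → ℝ) (S : Matrix (Fin K) (Fin K) ℝ) : Prop :=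
  ∀ a : Fin K → ℝ,
    Measure.map (fun ω => ∑ i, a i * X ω i) μ =
      gaussianReal (∑ i, a i * m i) (Real.toNNReal (a ⬝ᵥ S *ᵥ a))

open scoped NNReal ENNReal

section QuadraticForms

variable {ι n R : Type*} [Fintype ι] [Fintype n] [Field R]

lemma sum_sum_mul_sum_div_mul (β : n → R) (A : ι → Matrix n n R) (d : ι → R) :
    ∑ k, ∑ l, β k * (∑ j, A j k l / d j) * β l = ∑ j, β ⬝ᵥ A j *ᵥ β / d j := by
  simp only [dotProduct, mulVec, Finset.mul_sum, Finset.sum_mul, Finset.sum_div]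
  rw [Finset.sum_comm_cycle]
  refine sum_congr rfl fun j _ => sum_congr rfl fun k _ => sum_congr rfl fun l _ => ?_
  ring

lemma dotProduct_vecMulVec_self_mulVec (u β : n → R) :
    β ⬝ᵥ vecMulVec u u *ᵥ β = (u ⬝ᵥ β) ^ 2 := by
  simp only [dotProduct, mulVec, vecMulVec_apply, sq, Finset.sum_mul, Finset.mul_sum]
  rw [Finset.sum_comm]
  refine sum_congr rfl fun k _ => sum_congr rfl fun l _ => ?_
  ring

lemma debiased_loss_eq_sum (β : n → R) (u : ι → n → R) (S : ι → Matrix n n R) (G d : ι → R) :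
    (1 / 2 : R) * ∑ k, ∑ l, β k *
        ((∑ j, u j k * u j l / d j) - ∑ j, S j k l / d j) * β l
      - ∑ j, G j * (∑ k, u j k * β k) / d j
      = ∑ j, ((1 / 2 : R) * ((u j ⬝ᵥ β) ^ 2 - β ⬝ᵥ S j *ᵥ β) - G j * (u j ⬝ᵥ β)) / d j := by
  have hA : ∀ k l, (∑ j, u j k * u j l / d j) - ∑ j, S j k l / d j
      = ∑ j, (vecMulVec (u j) (u j) - S j) k l / d j := fun k l => by
    simp only [← Finset.sum_sub_distrib, Matrix.sub_apply, vecMulVec_apply, sub_div]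
  simp only [hA]
  rw [sum_sum_mul_sum_div_mul, Finset.mul_sum, ← Finset.sum_sub_distrib]
  refine Finset.sum_congr rfl fun j _ => ?_
  rw [sub_mulVec, dotProduct_sub, dotProduct_vecMulVec_self_mulVec]
  simp only [dotProduct]
  ring

lemma oracle_loss_eq_sum (β : n → R) (u : ι → n → R) (G d : ι → R) :
    (1 / 2 : R) * ∑ k, ∑ l, β k * (∑ j, u j k * u j l / d j) * β l
      - ∑ j, G j * (∑ k, u j k * β k) / d j
      = ∑ j, ((1 / 2 : R) * (u j ⬝ᵥ β) ^ 2 - G j * (u j ⬝ᵥ β)) / d j := by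
  simpa using debiased_loss_eq_sum β u 0 G d

end QuadraticForms

namespace ProbabilityTheory

variable {Ω : Type*} {mΩ : MeasurableSpace Ω} {P : Measure Ω}

lemma hasLaw_of_map_eq {𝓧 : Type*} {m𝓧 : MeasurableSpace 𝓧} {X : Ω → 𝓧} {μ : Measure 𝓧}
    [NeZero μ] (h : P.map X = μ) : HasLaw X μ P :=
  ⟨.of_map_ne_zero (h ▸ NeZero.ne μ), h⟩

section GaussianReal

variable {X : Ω → ℝ} {m : ℝ} {v : ℝ≥0}

lemma HasLaw.memLp_of_gaussianReal (hX : HasLaw X (gaussianReal m v) P) {p : ℝ≥0∞}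
    (hp : p ≠ ∞) : MemLp X p P := by
  have h := memLp_id_gaussianReal' (μ := m) (v := v) p hp
  rw [← hX.map_eq] at h
  exact (memLp_map_measure_iff (hX.map_eq ▸ aestronglyMeasurable_id) hX.aemeasurable).1 h

lemma HasLaw.integral_of_gaussianReal (hX : HasLaw X (gaussianReal m v) P) : P[X] = m :=
  hX.integral_eq.trans integral_id_gaussianReal

lemma HasLaw.variance_of_gaussianReal (hX : HasLaw X (gaussianReal m v) P) : Var[X; P] = v :=
  hX.variance_eq.trans variance_id_gaussianReal

end GaussianReal

variable [IsProbabilityMeasure P] {L G : Ω → ℝ}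

lemma integral_sq_sub_variance (hL : MemLp L 2 P) :
    ∫ ω, (L ω ^ 2 - Var[L; P]) ∂P = P[L] ^ 2 := by
  rw [integral_sub hL.integrable_sq (integrable_const _), integral_const, variance_eq_sub hL]
  simp

lemma integrable_half_sq_sub_sub_mul (hL : MemLp L 2 P) (hG : Integrable G P)
    (hGL : IndepFun G L P) (c : ℝ) :
    Integrable (fun ω => (1 / 2 : ℝ) * (L ω ^ 2 - c) - G ω * L ω) P :=
  ((hL.integrable_sq.sub (integrable_const c)).const_mul _).sub
    (hGL.integrable_mul hG (hL.integrable one_le_two))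

lemma integral_half_sq_sub_variance_sub_mul (hL : MemLp L 2 P) (hG : Integrable G P)
    (hGL : IndepFun G L P) :
    ∫ ω, ((1 / 2 : ℝ) * (L ω ^ 2 - Var[L; P]) - G ω * L ω) ∂P
      = (1 / 2 : ℝ) * P[L] ^ 2 - P[G] * P[L] := by
  rw [integral_sub (f := fun ω => (1 / 2 : ℝ) * (L ω ^ 2 - Var[L; P])) (g := fun ω => G ω * L ω)
      ((hL.integrable_sq.sub (integrable_const _)).const_mul _)
      (hGL.integrable_mul hG (hL.integrable one_le_two)),
    integral_const_mul, integral_sq_sub_variance hL,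
    hGL.integral_fun_mul_eq_mul_integral hG.aestronglyMeasurable hL.aestronglyMeasurable]

end ProbabilityTheory

lemma IsGaussianVec.hasLaw_dotProduct {Ω : Type*} [MeasurableSpace Ω] {K : ℕ} {μ : Measure Ω}
    {X : Ω → Fin K → ℝ} {m : Fin K → ℝ} {S : Matrix (Fin K) (Fin K) ℝ}
    (h : IsGaussianVec μ X m S) (a : Fin K → ℝ) :
    HasLaw (fun ω => X ω ⬝ᵥ a) (gaussianReal (m ⬝ᵥ a) (a ⬝ᵥ S *ᵥ a).toNNReal) μ := by
  refine hasLaw_of_map_eq ?_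
  simp only [dotProduct_comm _ a]
  exact h a

theorem debiased_loss_unbiased
    {Ω : Type*} [MeasurableSpace Ω] (μ : Measure Ω) [IsProbabilityMeasure μ]
    (p K : ℕ)
    (ghat : Fin p → Ω → Fin K → ℝ) (Ghat : Fin p → Ω → ℝ)
    (γ : Fin p → Fin K → ℝ) (Γ : Fin p → ℝ)
    (SX : Fin p → Matrix (Fin K) (Fin K) ℝ) (σY : Fin p → ℝ)
    (hSX : ∀ j, (SX j).PosSemidef)
    (hγ : ∀ j, IsGaussianVec μ (ghat j) (γ j) (SX j))
    (hΓ : ∀ j, Measure.map (Ghat j) μ =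
      gaussianReal (Γ j) (Real.toNNReal ((σY j) ^ 2)))
    (hindep : iIndepFun
      (β := fun t : Fin p ⊕ Fin p => Sum.elim (fun _ => Fin K → ℝ) (fun _ => ℝ) t)
      (m := fun t => match t with
        | Sum.inl _ => (inferInstance : MeasurableSpace (Fin K → ℝ))
        | Sum.inr _ => (inferInstance : MeasurableSpace ℝ))
      (fun t => match t with
        | Sum.inl j => ghat j
        | Sum.inr j => Ghat j) μ) :
    ∀ β : Fin K → ℝ,
      (∫ ω, ((1 / 2 : ℝ) * ∑ k, ∑ l, β k *
            ((∑ j, ghat j ω k * ghat j ω l / σY j ^ 2) - ∑ j, SX j k l / σY j ^ 2) * β l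
          - ∑ j, Ghat j ω * (∑ k, ghat j ω k * β k) / σY j ^ 2) ∂μ)
        = (1 / 2 : ℝ) * (∑ k, ∑ l, β k * (∑ j, γ j k * γ j l / σY j ^ 2) * β l)
          - ∑ j, Γ j * (∑ k, γ j k * β k) / σY j ^ 2 := by
  intro β
  have hL j : HasLaw (fun ω => ghat j ω ⬝ᵥ β)
      (gaussianReal (γ j ⬝ᵥ β) (β ⬝ᵥ SX j *ᵥ β).toNNReal) μ :=
    (hγ j).hasLaw_dotProduct β
  have hG j : HasLaw (Ghat j) (gaussianReal (Γ j) (σY j ^ 2).toNNReal) μ :=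
    hasLaw_of_map_eq (hΓ j)
  have hvar j : Var[fun ω => ghat j ω ⬝ᵥ β; μ] = β ⬝ᵥ SX j *ᵥ β := by
    rw [(hL j).variance_of_gaussianReal,
      Real.coe_toNNReal _ (by simpa using (hSX j).dotProduct_mulVec_nonneg β)]
  have hGL j : IndepFun (Ghat j) (fun ω => ghat j ω ⬝ᵥ β) μ := by
    have h : IndepFun (Ghat j) (ghat j) μ := hindep.indepFun Sum.inr_ne_inl
    exact h.comp (φ := id) (ψ := (· ⬝ᵥ β)) measurable_id (by fun_prop)
  have hL2 j := (hL j).memLp_of_gaussianReal (p := 2) ENNReal.ofNat_ne_top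
  have hG1 j := memLp_one_iff_integrable.1 ((hG j).memLp_of_gaussianReal ENNReal.one_ne_top)
  calc _ = ∫ ω, ∑ j, ((1 / 2 : ℝ) * ((ghat j ω ⬝ᵥ β) ^ 2 - Var[fun ω => ghat j ω ⬝ᵥ β; μ])
            - Ghat j ω * (ghat j ω ⬝ᵥ β)) / σY j ^ 2 ∂μ := by
        simp only [debiased_loss_eq_sum, hvar]
    _ = ∑ j, ((1 / 2 : ℝ) * (γ j ⬝ᵥ β) ^ 2 - Γ j * (γ j ⬝ᵥ β)) / σY j ^ 2 := by
        rw [integral_finsetSum _ fun j _ =>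
          (integrable_half_sq_sub_sub_mul (hL2 j) (hG1 j) (hGL j) _).div_const _]
        refine sum_congr rfl fun j _ => ?_
        rw [integral_div, integral_half_sq_sub_variance_sub_mul (hL2 j) (hG1 j) (hGL j),
          (hL j).integral_of_gaussianReal, (hG j).integral_of_gaussianReal]
    _ = _ := (oracle_loss_eq_sum β γ Γ _).symm
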